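/- The group M = G(A ⊆ B) is metabelian: its commutator subgroup is contained in its center. In particular M is nilpotent of class at most 2. -/

import Mathlib

namespace Metabelian

variable {B : Type*} [AddCommGroup B]

/-- The subgroup `A` of `B` is bounded by `n`, i.e. `n • a = 0` for all `a ∈ A`. -/
class BoundedSub (A : AddSubgroup B) (n : ℕ) : Prop where
  bound : ∀ a : A, n • (a : B) = 0

lemma val_smul_eq {n : ℕ} (a : B) (h : n • a = 0) (x : ℕ) : (x % n) • a = x • a := by
  conv_rhs => rw [← Nat.mod_add_div x n]
  rw [add_nsmul, mul_nsmul, h, smul_zero, add_zero]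

/-- Birkhoff's construction `G(A ⊆ B) = (A ⊕ B) ⋊_ψ D` with `D = ℤ/n` where `n` bounds `A`:
the underlying set is `A × B × ℤ/n` and the (multiplicatively written) group operation is
`(a,b,d)·(a',b',d') = (a+a', b + d·ι(a') + b', d+d')`. -/
instance mgroup (A : AddSubgroup B) (n : ℕ) [NeZero n] [BoundedSub A n] :
    Group (A × B × ZMod n) where
  mul x y := (x.1 + y.1, x.2.1 + x.2.2.val • (y.1 : B) + y.2.1, x.2.2 + y.2.2)
  one := (0, 0, 0)
  inv x := (-x.1, -x.2.1 + x.2.2.val • (x.1 : B), -x.2.2)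
  mul_assoc x y z := by
    have hb := BoundedSub.bound (A := A) (n := n)
    refine Prod.ext (add_assoc _ _ _) (Prod.ext ?_ (add_assoc _ _ _))
    show x.2.1 + x.2.2.val • (y.1 : B) + y.2.1 + (x.2.2 + y.2.2).val • (z.1 : B) + z.2.1
        = x.2.1 + x.2.2.val • ((y.1 + z.1 : A) : B) + (y.2.1 + y.2.2.val • (z.1 : B) + z.2.1)
    rw [ZMod.val_add, val_smul_eq _ (hb z.1), AddSubgroup.coe_add, smul_add, add_nsmul]
    abel
  one_mul x := by
    refine Prod.ext (zero_add _) (Prod.ext ?_ (zero_add _))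
    show (0 : B) + (0 : ZMod n).val • (x.1 : B) + x.2.1 = x.2.1
    simp
  mul_one x := by
    refine Prod.ext (add_zero _) (Prod.ext ?_ (add_zero _))
    show x.2.1 + x.2.2.val • ((0 : A) : B) + 0 = x.2.1
    simp
  inv_mul_cancel x := by
    have hb := BoundedSub.bound (A := A) (n := n)
    refine Prod.ext (neg_add_cancel _) (Prod.ext ?_ (neg_add_cancel _))
    show -x.2.1 + x.2.2.val • (x.1 : B) + (-x.2.2).val • (x.1 : B) + x.2.1 = 0
    have h2 : ((-x.2.2).val + x.2.2.val) % n = 0 := by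
      rw [← ZMod.val_add, neg_add_cancel, ZMod.val_zero]
    have h3 : x.2.2.val • (x.1 : B) + (-x.2.2).val • (x.1 : B) = 0 := by
      rw [add_comm, ← add_nsmul, ← val_smul_eq _ (hb x.1), h2, zero_nsmul]
    rw [add_assoc, add_assoc, ← add_assoc (x.2.2.val • (x.1 : B)), h3, zero_add, neg_add_cancel]

/-!
Forgetting the `B`-coordinate is a homomorphism onto the abelian group `A × D`, so every
commutator lies in its kernel `{0} × B × {0}`. That kernel is central, since the twisting term
`d • ι(a')` of a product vanishes as soon as one factor has `a' = 0` and the other `d = 0`.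
-/

section Construction

variable (A : AddSubgroup B) (n : ℕ) [NeZero n] [BoundedSub A n]

lemma mul_def (x y : A × B × ZMod n) :
    x * y = (x.1 + y.1, x.2.1 + x.2.2.val • (y.1 : B) + y.2.1, x.2.2 + y.2.2) :=
  rfl

def forgetB : (A × B × ZMod n) →* Multiplicative (A × ZMod n) where
  toFun x := .ofAdd (x.1, x.2.2)
  map_one' := rfl
  map_mul' _ _ := rfl

lemma mem_ker_forgetB {x : A × B × ZMod n} : x ∈ (forgetB A n).ker ↔ x.1 = 0 ∧ x.2.2 = 0 := by
  simp [forgetB, MonoidHom.mem_ker, Prod.ext_iff]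

lemma ker_forgetB_le_center : (forgetB A n).ker ≤ Subgroup.center (A × B × ZMod n) := by
  intro x hx
  obtain ⟨ha, hd⟩ := (mem_ker_forgetB A n).mp hx
  refine Subgroup.mem_center_iff.mpr fun g => ?_
  simp only [mul_def, ha, hd, add_zero, ZMod.val_zero, zero_smul,
    ZeroMemClass.coe_zero, smul_zero, add_comm]

theorem commutator_le_center :
    commutator (A × B × ZMod n) ≤ Subgroup.center (A × B × ZMod n) :=
  (Abelianization.commutator_subset_ker (forgetB A n)).trans (ker_forgetB_le_center A n)

end Construction

theorem _root_.Subgroup.top_lowerCentralSeries_two_eq_bot_iff {G : Type*} [Group G] :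
    (⊤ : Subgroup G).lowerCentralSeries 2 = ⊥ ↔ commutator G ≤ Subgroup.center G :=
  Subgroup.commutator_top_right_eq_bot_iff_le_center

theorem construction_is_metabelian_general (p m : ℕ) [Fact p.Prime] {B : Type*} [AddCommGroup B]
    (A : AddSubgroup B) [BoundedSub A (p ^ m)] :
    commutator (A × B × ZMod (p ^ m)) ≤ Subgroup.center (A × B × ZMod (p ^ m)) ∧
    Group.IsNilpotent (A × B × ZMod (p ^ m)) ∧
    (⊤ : Subgroup (A × B × ZMod (p ^ m))).lowerCentralSeries 2 = ⊥ := by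
  have hcomm := commutator_le_center A (p ^ m)
  have hlcs := Subgroup.top_lowerCentralSeries_two_eq_bot_iff.mpr hcomm
  exact ⟨hcomm, Subgroup.nilpotent_iff_lowerCentralSeries.mpr ⟨2, hlcs⟩, hlcs⟩

/-- The group `M = G(A ⊆ B)` is metabelian: its commutator subgroup is contained in its
center.  In particular `M` is nilpotent of class at most `2`. -/
theorem construction_is_metabelian (p m : ℕ) [Fact p.Prime] {B : Type*} [AddCommGroup B]
    [Finite B] (hpB : ∀ b : B, ∃ k : ℕ, p ^ k • b = 0) (A : AddSubgroup B)
    [BoundedSub A (p ^ m)] (hexp : AddMonoid.exponent A = p ^ m) :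
    commutator (A × B × ZMod (p ^ m)) ≤ Subgroup.center (A × B × ZMod (p ^ m)) ∧
    Group.IsNilpotent (A × B × ZMod (p ^ m)) ∧
    (⊤ : Subgroup (A × B × ZMod (p ^ m))).lowerCentralSeries 2 = ⊥ :=
  construction_is_metabelian_general p m A
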